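/- arXiv:2004.01169 — 5 statements merged into one kernel-verified Lean document; each statement's English description precedes it below -/
import Mathlib

section
/- (Fixed-time settling bound, classical case.) Let $V : [0,\infty) \to [0,\infty)$ be differentiable and satisfy $V'(t) \leq -a V(t)^p - b V(t)^q$ for all $t$, where $a, b > 0$, $0 < p < 1$, $q > 1$. Then for every initial value $V(0) \geq 0$, there exists $T \leq \frac{1}{a(1-p)} + \frac{1}{b(q-1)}$ such that $V(T) = 0$. -/
/-! When `V' ≤ -c V^r` along a positive solution, `V^(1-r)/(1-r)` decreases at rate at least `c`.
With `r = q > 1` this pushes `V` below `1` within time `1/(b(q-1))`, whatever `V 0` is; from then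
on, with `r = p < 1`, `V^(1-p)` starts at most `1` and decreases at rate `a(1-p)`, so `V` vanishes
within a further time `1/(a(1-p))`. -/

open Real Set

theorem rpow_one_sub_div_sub_le_of_deriv_le_neg_mul_rpow {V : ℝ → ℝ} {s u c r : ℝ}
    (hr : r ≠ 1) (hsu : s ≤ u) (hcont : ContinuousOn V (Icc s u))
    (hdiff : DifferentiableOn ℝ V (Ioo s u)) (hpos : ∀ t ∈ Icc s u, 0 < V t)
    (hder : ∀ t ∈ Ioo s u, deriv V t ≤ -c * V t ^ r) :
    V u ^ (1 - r) / (1 - r) - V s ^ (1 - r) / (1 - r) ≤ -c * (u - s) := by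
  have hderiv : ∀ t ∈ Ioo s u,
      HasDerivAt (fun t => V t ^ (1 - r) / (1 - r)) (deriv V t / V t ^ r) t := by
    intro t ht
    have hVt := hpos t (Ioo_subset_Icc_self ht)
    refine (((hdiff.differentiableAt (isOpen_Ioo.mem_nhds ht)).hasDerivAt.rpow_const
      (Or.inl hVt.ne')).div_const (1 - r)).congr_deriv ?_
    rw [sub_sub_cancel_left, rpow_neg hVt.le]
    field_simp [sub_ne_zero.2 hr.symm]
  refine (convex_Icc s u).image_sub_le_mul_sub_of_deriv_le
    (f := fun t => V t ^ (1 - r) / (1 - r)) ?_ ?_ ?_ s (left_mem_Icc.2 hsu) u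
    (right_mem_Icc.2 hsu) hsu
  · exact (hcont.rpow_const fun t ht => Or.inl (hpos t ht).ne').div_const _
  · rw [interior_Icc]
    exact fun t ht => (hderiv t ht).differentiableAt.differentiableWithinAt
  · rw [interior_Icc]
    intro t ht
    rw [(hderiv t ht).deriv, div_le_iff₀ (rpow_pos_of_pos (hpos t (Ioo_subset_Icc_self ht)) r)]
    exact hder t ht

theorem exists_le_one_of_deriv_le_neg_mul_rpow_of_one_lt {V : ℝ → ℝ} {s b q : ℝ} (hb : 0 < b)
    (hq : 1 < q) (hcont : ContinuousOn V (Icc s (s + 1 / (b * (q - 1)))))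
    (hdiff : DifferentiableOn ℝ V (Ioo s (s + 1 / (b * (q - 1)))))
    (hder : ∀ t ∈ Ioo s (s + 1 / (b * (q - 1))), deriv V t ≤ -b * V t ^ q) :
    ∃ t ∈ Icc s (s + 1 / (b * (q - 1))), V t ≤ 1 := by
  have hT : 0 < 1 / (b * (q - 1)) := by have := sub_pos.2 hq; positivity
  by_contra! hgt
  have hpos : ∀ t ∈ Icc s (s + 1 / (b * (q - 1))), 0 < V t := fun t ht =>
    one_pos.trans (hgt t ht)
  have hend : V (s + 1 / (b * (q - 1))) ^ (1 - q) < 1 :=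
    rpow_lt_one_of_one_lt_of_neg (hgt _ (right_mem_Icc.2 (by linarith))) (by linarith)
  have hstart : 0 < V s ^ (1 - q) := rpow_pos_of_pos (hpos s (left_mem_Icc.2 (by linarith))) _
  have key := rpow_one_sub_div_sub_le_of_deriv_le_neg_mul_rpow hq.ne' (by linarith) hcont hdiff
    hpos hder
  have hrate : -b * (1 / (b * (q - 1))) * (1 - q) = 1 := by
    field_simp [(sub_pos.2 hq).ne']
    ring
  rw [add_sub_cancel_left, ← sub_div, div_le_iff_of_neg (by linarith), hrate] at key
  linarith

theorem exists_eq_zero_of_deriv_le_neg_mul_rpow_of_lt_one {V : ℝ → ℝ} {s a p : ℝ} (ha : 0 < a)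
    (hp : p < 1) (hcont : ContinuousOn V (Icc s (s + 1 / (a * (1 - p)))))
    (hdiff : DifferentiableOn ℝ V (Ioo s (s + 1 / (a * (1 - p)))))
    (hnn : ∀ t ∈ Icc s (s + 1 / (a * (1 - p))), 0 ≤ V t) (hs : V s ≤ 1)
    (hder : ∀ t ∈ Ioo s (s + 1 / (a * (1 - p))), deriv V t ≤ -a * V t ^ p) :
    ∃ t ∈ Icc s (s + 1 / (a * (1 - p))), V t = 0 := by
  have hT : 0 < 1 / (a * (1 - p)) := by have := sub_pos.2 hp; positivity
  by_contra! hne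
  have hpos : ∀ t ∈ Icc s (s + 1 / (a * (1 - p))), 0 < V t := fun t ht =>
    (hnn t ht).lt_of_ne (hne t ht).symm
  have hend : 0 < V (s + 1 / (a * (1 - p))) ^ (1 - p) :=
    rpow_pos_of_pos (hpos _ (right_mem_Icc.2 (by linarith))) _
  have hstart : V s ^ (1 - p) ≤ 1 :=
    rpow_le_one (hnn s (left_mem_Icc.2 (by linarith))) hs (by linarith)
  have key := rpow_one_sub_div_sub_le_of_deriv_le_neg_mul_rpow hp.ne (by linarith) hcont hdiff
    hpos hder
  have hrate : -a * (1 / (a * (1 - p))) * (1 - p) = -1 := by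
    field_simp [(sub_pos.2 hp).ne']
  rw [add_sub_cancel_left, ← sub_div, div_le_iff₀ (by linarith), hrate] at key
  linarith

theorem stmt6_general (a b p q : ℝ) (ha : 0 < a) (hb : 0 < b) (hp1 : p < 1)
    (hq : 1 < q) (V : ℝ → ℝ) (hdiff : Differentiable ℝ V)
    (hnn : ∀ t, 0 ≤ t → 0 ≤ V t)
    (hineq : ∀ t, 0 ≤ t → deriv V t ≤ -a * (V t) ^ p - b * (V t) ^ q) :
    ∃ T, 0 ≤ T ∧ T ≤ 1 / (a * (1 - p)) + 1 / (b * (q - 1)) ∧ V T = 0 := by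
  obtain ⟨t₁, ht₁, hVt₁⟩ := exists_le_one_of_deriv_le_neg_mul_rpow_of_one_lt (s := 0) hb hq
    hdiff.continuous.continuousOn hdiff.differentiableOn fun t ht => by
      have := mul_nonneg ha.le (rpow_nonneg (hnn t ht.1.le) p)
      linarith [hineq t ht.1.le]
  obtain ⟨T, hT, hVT⟩ := exists_eq_zero_of_deriv_le_neg_mul_rpow_of_lt_one (s := t₁) ha hp1
    hdiff.continuous.continuousOn hdiff.differentiableOn
    (fun t ht => hnn t (ht₁.1.trans ht.1)) hVt₁ fun t ht => by
      have := mul_nonneg hb.le (rpow_nonneg (hnn t (ht₁.1.trans ht.1.le)) q)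
      linarith [hineq t (ht₁.1.trans ht.1.le)]
  exact ⟨T, ht₁.1.trans hT.1, by linarith [ht₁.2, hT.2], hVT⟩

theorem stmt6 (a b p q : ℝ) (ha : 0 < a) (hb : 0 < b) (hp0 : 0 < p) (hp1 : p < 1)
    (hq : 1 < q) (V : ℝ → ℝ) (hdiff : Differentiable ℝ V)
    (hnn : ∀ t, 0 ≤ t → 0 ≤ V t)
    (hineq : ∀ t, 0 ≤ t → deriv V t ≤ -a * (V t) ^ p - b * (V t) ^ q) :
    ∃ T, 0 ≤ T ∧ T ≤ 1 / (a * (1 - p)) + 1 / (b * (q - 1)) ∧ V T = 0 :=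
  stmt6_general a b p q ha hb hp1 hq V hdiff hnn hineq
end

section
/- (Fixed-time convergence to a sublevel set, case $c_3 \leq 0$.) Let $c_1, c_2 > 0$, $c_3 \leq 0$, $\mu > 1$, and let $V : [0,\infty) \to [0,\infty)$ be differentiable with $V'(t) \leq -c_1 V(t)^{1+1/\mu} - c_2 V(t)^{1-1/\mu} + c_3$ whenever $V(t) > 0$. Then there exists $T \leq \frac{\mu \pi}{2\sqrt{c_1 c_2}}$ with $V(T) = 0$. -/
open Real

theorem stmt7 (c1 c2 c3 μ : ℝ) (hc1 : 0 < c1) (hc2 : 0 < c2) (hc3 : c3 ≤ 0)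
    (hμ : 1 < μ) (V : ℝ → ℝ) (hdiff : Differentiable ℝ V)
    (hnn : ∀ t, 0 ≤ t → 0 ≤ V t)
    (hineq : ∀ t, 0 ≤ t → 0 < V t →
      deriv V t ≤ -c1 * (V t) ^ (1 + 1/μ) - c2 * (V t) ^ (1 - 1/μ) + c3) :
    ∃ T, 0 ≤ T ∧ T ≤ μ * Real.pi / (2 * Real.sqrt (c1 * c2)) ∧ V T = 0 := by
  by_contra hcon
  push_neg at hcon
  have hμ0 : (0:ℝ) < μ := by linarith
  have hs : 0 < Real.sqrt (c1 * c2) := Real.sqrt_pos.2 (mul_pos hc1 hc2)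
  set Tm : ℝ := μ * Real.pi / (2 * Real.sqrt (c1 * c2)) with hTm
  have hTm0 : 0 < Tm := by
    have := Real.pi_pos
    positivity
  have hpos : ∀ t ∈ Set.Icc (0:ℝ) Tm, 0 < V t := by
    intro t ht
    exact lt_of_le_of_ne (hnn t ht.1) (Ne.symm (hcon t ht.1 ht.2))
  set a : ℝ := Real.sqrt (c1 / c2) with ha
  have ha0 : 0 < a := Real.sqrt_pos.2 (div_pos hc1 hc2)
  have ha2 : a ^ 2 = c1 / c2 := Real.sq_sqrt (le_of_lt (div_pos hc1 hc2))
  have hac2 : a * c2 = Real.sqrt (c1 * c2) := by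
    rw [← Real.sqrt_sq (by positivity : (0:ℝ) ≤ a * c2)]
    congr 1
    rw [mul_pow, ha2]
    field_simp
  set k : ℝ := Real.sqrt (c1 * c2) / μ with hk
  have hk0 : 0 < k := div_pos hs hμ0
  set φ : ℝ → ℝ := fun t => Real.arctan (a * (V t) ^ (1/μ)) + k * t with hφ
  have hcont : Continuous φ := by
    apply Continuous.add
    · apply Real.continuous_arctan.comp
      apply Continuous.mul continuous_const
      exact hdiff.continuous.rpow_const (fun x => Or.inr (by positivity))
    · exact continuous_const.mul continuous_id
  have hant : AntitoneOn φ (Set.Icc 0 Tm) := by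
    have key : ∀ t ∈ interior (Set.Icc (0:ℝ) Tm), HasDerivAt φ
        ((1/(1+(a * (V t) ^ (1/μ))^2)) * (a * ((1/μ * (V t)^(1/μ - 1)) * deriv V t)) + k) t := by
      intro t ht
      rw [interior_Icc] at ht
      have hVt : 0 < V t := hpos t ⟨ht.1.le, ht.2.le⟩
      have hu : HasDerivAt (fun s => (V s) ^ (1/μ))
          ((1/μ * (V t)^(1/μ - 1)) * deriv V t) t :=
        (Real.hasDerivAt_rpow_const (p := 1/μ) (Or.inl hVt.ne')).comp t (hdiff t).hasDerivAt
      have hy : HasDerivAt (fun s => a * (V s) ^ (1/μ))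
          (a * ((1/μ * (V t)^(1/μ - 1)) * deriv V t)) t := hu.const_mul a
      have harc : HasDerivAt (fun s => Real.arctan (a * (V s) ^ (1/μ)))
          ((1/(1+(a * (V t) ^ (1/μ))^2)) * (a * ((1/μ * (V t)^(1/μ - 1)) * deriv V t))) t :=
        (Real.hasDerivAt_arctan _).comp t hy
      have hlin : HasDerivAt (fun s : ℝ => k * s) k t := by
        simpa using (hasDerivAt_id t).const_mul k
      exact harc.add hlin
    apply antitoneOn_of_deriv_nonpos (convex_Icc 0 Tm) hcont.continuousOn
    · intro t ht
      exact (key t ht).differentiableAt.differentiableWithinAt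
    · intro t ht
      rw [(key t ht).deriv]
      rw [interior_Icc] at ht
      have hVt : 0 < V t := hpos t ⟨ht.1.le, ht.2.le⟩
      set x : ℝ := V t with hx
      set w : ℝ := x ^ (1/μ) with hw
      have hw0 : 0 < w := Real.rpow_pos_of_pos hVt _
      have hpow1 : x ^ (1/μ - 1) = w / x := by
        rw [hw, Real.rpow_sub hVt, Real.rpow_one]
      have hpow2 : x ^ (1 + 1/μ) = x * w := by
        rw [hw, Real.rpow_add hVt, Real.rpow_one]
      have hpow3 : x ^ (1 - 1/μ) = x / w := by
        rw [hw, Real.rpow_sub hVt, Real.rpow_one]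
      have hd : deriv V t ≤ -c1 * (x * w) - c2 * (x / w) + c3 := by
        have := hineq t ht.1.le hVt
        rwa [← hx, hpow2, hpow3] at this
      have hd' : deriv V t ≤ -(c1 * (x * w) + c2 * (x / w)) := by linarith
      -- multiply by w/x > 0
      have hwx : 0 < w / x := div_pos hw0 hVt
      have hkey : (w / x) * deriv V t ≤ -(c1 * w^2 + c2) := by
        have h1 : (w / x) * deriv V t ≤ (w / x) * (-(c1 * (x * w) + c2 * (x / w))) :=
          mul_le_mul_of_nonneg_left hd' hwx.le
        have h2 : (w / x) * (-(c1 * (x * w) + c2 * (x / w))) = -(c1 * w^2 + c2) := by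
          field_simp
        linarith [h1, h2.le, h2.ge]
      have hE : 0 < 1 + (a * w)^2 := by positivity
      rw [hpow1]
      -- goal: (1/(1+(a*w)^2)) * (a * ((1/μ * (w/x)) * deriv V t)) + k ≤ 0
      have hnum : a * ((1/μ * (w / x)) * deriv V t) ≤ -(1/μ) * (a * (c1 * w^2 + c2)) := by
        have : (1/μ * (w / x)) * deriv V t ≤ (1/μ) * (-(c1 * w^2 + c2)) := by
          rw [mul_assoc]
          apply mul_le_mul_of_nonneg_left hkey (by positivity)
        nlinarith [this, ha0.le, mul_le_mul_of_nonneg_left this ha0.le]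
      have hkE : k * (1 + (a * w)^2) = (1/μ) * (a * (c1 * w^2 + c2)) := by
        rw [hk, ← hac2, mul_pow, ha2]
        field_simp
        ring
      have hfin : a * (1/μ * (w / x) * deriv V t) + k * (1 + (a * w)^2) ≤ 0 := by
        rw [hkE]; linarith [hnum]
      have heq : 1/(1+(a*w)^2) * (a * (1/μ * (w / x) * deriv V t)) + k
          = (a * (1/μ * (w / x) * deriv V t) + k * (1 + (a * w)^2)) / (1 + (a * w)^2) := by
        field_simp
      rw [heq]
      exact div_nonpos_of_nonpos_of_nonneg hfin hE.le
  have h1 : φ Tm ≤ φ 0 :=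
    hant ⟨le_refl 0, hTm0.le⟩ ⟨hTm0.le, le_refl Tm⟩ hTm0.le
  have hkTm : k * Tm = Real.pi / 2 := by
    rw [hk, hTm]
    field_simp
  have harc0 : Real.arctan (a * (V 0) ^ (1/μ)) < Real.pi / 2 := Real.arctan_lt_pi_div_two _
  have harcT : 0 ≤ Real.arctan (a * (V Tm) ^ (1/μ)) := by
    rw [← Real.arctan_zero]
    apply Real.arctan_strictMono.monotone
    have := hnn Tm hTm0.le
    positivity
  have hφTm : φ Tm = Real.arctan (a * (V Tm) ^ (1/μ)) + Real.pi / 2 := by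
    rw [hφ]; simp only []; rw [hkTm]
  have hφ0 : φ 0 = Real.arctan (a * (V 0) ^ (1/μ)) := by
    rw [hφ]; simp
  rw [hφTm, hφ0] at h1
  linarith
end

section
/- (Fixed-time convergence with small disturbance.) Let $c_1, c_2 > 0$, $0 < c_3 < 2\sqrt{c_1 c_2}$, $\mu > 1$, and let $V : [0,\infty) \to [0,\infty)$ be differentiable with $V'(t) \leq -c_1 V(t)^{1+1/\mu} - c_2 V(t)^{1-1/\mu} + c_3$ for all $t$ with $V(t) \geq 1$. If $V(0) \geq 1$, then there exists $T \leq \frac{\mu}{c_1 k_1}\left(\frac{\pi}{2} - \arctan k_2\right)$ such that $V(T) \leq 1$, where $k_1 = \sqrt{\frac{4 c_1 c_2 - c_3^2}{4 c_1^2}}$ and $k_2 = \frac{2c_1 - c_3}{\sqrt{4 c_1 c_2 - c_3^2}}$. -/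
set_option maxHeartbeats 1000000

open Real

theorem stmt8 (c1 c2 c3 μ : ℝ) (hc1 : 0 < c1) (hc2 : 0 < c2)
    (hc3pos : 0 < c3) (hc3 : c3 < 2 * Real.sqrt (c1 * c2)) (hμ : 1 < μ)
    (V : ℝ → ℝ) (hdiff : Differentiable ℝ V)
    (hnn : ∀ t, 0 ≤ t → 0 ≤ V t)
    (hineq : ∀ t, 0 ≤ t → 1 ≤ V t →
      deriv V t ≤ -c1 * (V t) ^ (1 + 1/μ) - c2 * (V t) ^ (1 - 1/μ) + c3)
    (hV0 : 1 ≤ V 0) :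
    ∃ T, 0 ≤ T ∧
      T ≤ μ / (c1 * Real.sqrt ((4*c1*c2 - c3^2) / (4*c1^2))) *
        (Real.pi / 2 - Real.arctan ((2*c1 - c3) / Real.sqrt (4*c1*c2 - c3^2))) ∧
      V T ≤ 1 := by
  have hμ0 : 0 < μ := by linarith
  have h4 : 0 < 4*c1*c2 - c3^2 := by
    have h := Real.sq_sqrt (mul_nonneg hc1.le hc2.le)
    nlinarith [Real.sqrt_nonneg (c1*c2)]
  set K : ℝ := Real.sqrt ((4*c1*c2 - c3^2) / (4*c1^2)) with hKdef
  have hK : 0 < K := Real.sqrt_pos.mpr (by positivity)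
  have hK2 : K^2 = (4*c1*c2 - c3^2) / (4*c1^2) :=
    Real.sq_sqrt (by positivity)
  have hKeq : Real.sqrt (4*c1*c2 - c3^2) = 2*c1*K := by
    have : 4*c1*c2 - c3^2 = (2*c1*K)^2 := by
      rw [mul_pow, mul_pow, hK2]; field_simp; ring
    rw [this, Real.sqrt_sq (by positivity)]
  set a : ℝ := c3 / (2*c1) with hadef
  set k2 : ℝ := (2*c1 - c3) / Real.sqrt (4*c1*c2 - c3^2) with hk2def
  have hk2 : k2 = (1 - a) / K := by
    rw [hk2def, hKeq, hadef]; field_simp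
  set Tb : ℝ := μ / (c1 * K) * (Real.pi / 2 - Real.arctan k2) with hTbdef
  have hTb0 : 0 ≤ Tb := by
    apply mul_nonneg (by positivity)
    have := Real.arctan_lt_pi_div_two k2
    linarith
  by_contra hcon
  push_neg at hcon
  have hVgt : ∀ t ∈ Set.Icc (0:ℝ) Tb, 1 < V t := fun t ht => hcon t ht.1 ht.2
  set h : ℝ → ℝ := fun s => Real.arctan ((V s ^ (1/μ) - a) / K) + (c1*K/μ) * s
    with hhdef
  have key : ∀ t ∈ Set.Icc (0:ℝ) Tb, ∃ d ≤ 0, HasDerivAt h d t := by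
    intro t ht
    have hVt : 1 < V t := hVgt t ht
    have hVpos : 0 < V t := by linarith
    have hV : HasDerivAt V (deriv V t) t := (hdiff t).hasDerivAt
    have hz : HasDerivAt (fun s => V s ^ (1/μ))
        (deriv V t * (1/μ) * V t ^ (1/μ - 1)) t :=
      hV.rpow_const (Or.inl hVpos.ne')
    have hu : HasDerivAt (fun s => (V s ^ (1/μ) - a) / K)
        (deriv V t * (1/μ) * V t ^ (1/μ - 1) / K) t :=
      (hz.sub_const a).div_const K
    have harc := hu.arctan
    have hlin : HasDerivAt (fun s => (c1*K/μ) * s) (c1*K/μ) t := by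
      simpa using (hasDerivAt_id t).const_mul (c1*K/μ)
    refine ⟨_, ?_, harc.add hlin⟩
    show 1 / (1 + ((V t ^ (1/μ) - a) / K)^2) *
        (deriv V t * (1/μ) * V t ^ (1/μ - 1) / K) + c1*K/μ ≤ 0
    set w := deriv V t with hwdef
    set P := V t ^ (1/μ - 1) with hPdef
    set zt := V t ^ (1/μ) with hztdef
    have hP : 0 < P := Real.rpow_pos_of_pos hVpos _
    have hw : w ≤ -c1 * V t ^ (1 + 1/μ) - c2 * V t ^ (1 - 1/μ) + c3 :=
      hineq t ht.1 hVt.le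
    have hz2 : V t ^ (1 + 1/μ) * P = zt ^ 2 := by
      rw [hPdef, hztdef, ← Real.rpow_add hVpos, ← Real.rpow_natCast (V t ^ (1/μ)) 2,
        ← Real.rpow_mul hVpos.le]
      norm_num
      ring_nf
    have hz0 : V t ^ (1 - 1/μ) * P = 1 := by
      rw [hPdef, ← Real.rpow_add hVpos]
      norm_num
    have hPz : P ≤ zt := by
      rw [hPdef, hztdef]
      exact Real.rpow_le_rpow_of_exponent_le hVt.le (by linarith)
    have hzt1 : 1 ≤ zt := Real.one_le_rpow hVt.le (by positivity)
    have hzderiv : w * (1/μ) * P ≤ -(c1/μ) * ((zt - a)^2 + K^2) := by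
      have h1 : w * P ≤ (-c1 * V t ^ (1 + 1/μ) - c2 * V t ^ (1 - 1/μ) + c3) * P :=
        mul_le_mul_of_nonneg_right hw hP.le
      have h3 : c3 * P ≤ c3 * zt := mul_le_mul_of_nonneg_left hPz hc3pos.le
      have hquad : -c1 * zt ^ 2 + c3 * zt - c2 = -c1 * ((zt - a)^2 + K^2) := by
        rw [hK2, hadef]; field_simp; ring
      have h4' : w * P ≤ -c1 * ((zt - a)^2 + K^2) := by
        rw [← hquad]; nlinarith [hz2, hz0]
      have h5 := mul_le_mul_of_nonneg_right h4'
        (le_of_lt (show (0:ℝ) < 1/μ by positivity))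
      calc w * (1/μ) * P = w * P * (1/μ) := by ring
        _ ≤ -c1 * ((zt - a)^2 + K^2) * (1/μ) := h5
        _ = -(c1/μ) * ((zt - a)^2 + K^2) := by ring
    set Q := (zt - a)^2 + K^2 with hQdef
    have hQ : 0 < Q := by positivity
    have hden : 1 + ((zt - a) / K)^2 = Q / K^2 := by
      rw [hQdef]; field_simp; ring
    have e1 : 1 / (1 + ((zt - a) / K)^2) = K^2 / Q := by
      rw [hden, one_div, inv_div]
    rw [e1]
    have e2 : K^2 / Q * (w * (1/μ) * P / K) = (w * (1/μ) * P) * K / Q := by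
      field_simp
    rw [e2]
    have e3 : (w * (1/μ) * P) * K / Q ≤ -(c1*K/μ) := by
      rw [div_le_iff₀ hQ]
      have h6 := mul_le_mul_of_nonneg_right hzderiv hK.le
      have h7 : -(c1/μ) * Q * K = -(c1*K/μ) * Q := by ring
      clear_value w P zt Q
      linarith
    clear_value w P zt Q
    linarith
  have hdiffOn : DifferentiableOn ℝ h (Set.Icc 0 Tb) := by
    intro t ht
    obtain ⟨d, _, hd⟩ := key t ht
    exact hd.differentiableAt.differentiableWithinAt
  have hanti : AntitoneOn h (Set.Icc 0 Tb) := by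
    apply antitoneOn_of_deriv_nonpos (convex_Icc _ _) hdiffOn.continuousOn
    · intro t ht
      rw [interior_Icc] at ht
      obtain ⟨d, _, hd⟩ := key t ⟨ht.1.le, ht.2.le⟩
      exact hd.differentiableAt.differentiableWithinAt
    · intro t ht
      rw [interior_Icc] at ht
      obtain ⟨d, hd0, hd⟩ := key t ⟨ht.1.le, ht.2.le⟩
      rw [hd.deriv]; exact hd0
  have hmem0 : (0:ℝ) ∈ Set.Icc (0:ℝ) Tb := ⟨le_refl _, hTb0⟩
  have hmemT : Tb ∈ Set.Icc (0:ℝ) Tb := ⟨hTb0, le_refl _⟩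
  have hle : h Tb ≤ h 0 := hanti hmem0 hmemT hTb0
  -- compute endpoints
  clear_value K a k2 Tb h
  have hzTb : 1 < V Tb ^ (1/μ) := by
    have h1 := hVgt Tb hmemT
    exact (Real.one_lt_rpow_iff_of_pos (by linarith)).mpr
      (Or.inl ⟨h1, by positivity⟩)
  have harcTb : Real.arctan k2 < Real.arctan ((V Tb ^ (1/μ) - a) / K) := by
    rw [hk2]
    apply Real.arctan_strictMono
    apply div_lt_div_of_pos_right (by linarith) hK
  have hco : (c1*K/μ) * Tb = Real.pi / 2 - Real.arctan k2 := by
    rw [hTbdef]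
    field_simp
  have h0lt : h 0 < Real.pi / 2 := by
    have h1 := Real.arctan_lt_pi_div_two ((V 0 ^ (1/μ) - a) / K)
    simp only [hhdef, mul_zero, add_zero]
    exact h1
  have hTblt : Real.pi / 2 < h Tb := by
    simp only [hhdef]
    rw [hco]
    clear hle h0lt key hanti hdiffOn hineq hcon hVgt hdiff hnn
    linarith
  clear key hanti hdiffOn hineq hcon hVgt hdiff hnn
  linarith
end

section
/- Let $c_1, c_2 > 0$, $0 < c_3 < 2\sqrt{c_1 c_2}$, $\mu > 1$, $a_1 = 1+1/\mu$, $a_2 = 1-1/\mu$. Then for any $V_0 \geq 1$, $\int_{1}^{V_0} \frac{dV}{c_1 V^{a_1} + c_2 V^{a_2} - c_3} \leq \frac{\mu}{c_1 k_1}\left(\frac{\pi}{2} - \arctan k_2\right)$, where $k_1 = \sqrt{\frac{4c_1c_2 - c_3^2}{4c_1^2}}$ and $k_2 = \frac{2c_1 - c_3}{\sqrt{4c_1c_2 - c_3^2}}$. -/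
/-!
For `V ≥ 1` we have `c3 ≤ c3 V`, so the integrand is at most
`1 / (c1 V^(1+t) + c2 V^(1-t) - c3 V)` with `t = 1/μ`. Writing `u = V^t`, this denominator
completes the square as `(c1 V / u) ((u - d)^2 + K^2)` with `d = c3 / (2 c1)` and
`K^2 = (4 c1 c2 - c3^2) / (4 c1^2) > 0`, and since `du = t u dV / V` the comparison integrand
has the explicit primitive `μ / (c1 K) * arctan ((V^t - d) / K)`, which stays below
`μ / (c1 K) * π / 2`.
-/

open Real

section CompletedSquare

variable {t c d K V : ℝ}

theorem rpow_completed_square (hV : 0 < V) :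
    c * V ^ (1 + t) - 2 * c * d * V + c * (d ^ 2 + K ^ 2) * V ^ (1 - t) =
      c * V / V ^ t * ((V ^ t - d) ^ 2 + K ^ 2) := by
  have hu : V ^ t ≠ 0 := (rpow_pos_of_pos hV t).ne'
  rw [rpow_add hV, rpow_sub hV, rpow_one]
  field_simp
  ring

theorem rpow_completed_square_pos (hc : 0 < c) (hK : K ≠ 0) (hV : 0 < V) :
    0 < c * V ^ (1 + t) - 2 * c * d * V + c * (d ^ 2 + K ^ 2) * V ^ (1 - t) := by
  have := rpow_pos_of_pos hV t
  rw [rpow_completed_square hV]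
  positivity

theorem hasDerivAt_arctan_rpow_sub_div (ht : t ≠ 0) (hc : c ≠ 0) (hK : K ≠ 0) (hV : 0 < V) :
    HasDerivAt (fun x => arctan ((x ^ t - d) / K) / (t * c * K))
      (1 / (c * V ^ (1 + t) - 2 * c * d * V + c * (d ^ 2 + K ^ 2) * V ^ (1 - t))) V := by
  have h := (((hasDerivAt_rpow_const (p := t) (Or.inl hV.ne')).sub_const d).div_const K).arctan
    |>.div_const (t * c * K)
  refine h.congr_deriv ?_
  have hu : V ^ t ≠ 0 := (rpow_pos_of_pos hV t).ne'
  have hq : (V ^ t - d) ^ 2 + K ^ 2 ≠ 0 := by positivity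
  rw [rpow_completed_square hV, rpow_sub_one hV.ne']
  field_simp
  ring

theorem integral_one_div_rpow_completed_square (ht : t ≠ 0) (hc : 0 < c) (hK : K ≠ 0)
    {a b : ℝ} (ha : 0 < a) (hab : a ≤ b) :
    ∫ V in a..b, 1 / (c * V ^ (1 + t) - 2 * c * d * V + c * (d ^ 2 + K ^ 2) * V ^ (1 - t)) =
      (arctan ((b ^ t - d) / K) - arctan ((a ^ t - d) / K)) / (t * c * K) := by
  have hpos : ∀ x ∈ Set.uIcc a b, 0 < x := fun x hx => ha.trans_le (Set.uIcc_of_le hab ▸ hx).1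
  have hne : ∀ x ∈ Set.uIcc a b, x ≠ 0 := fun x hx => (hpos x hx).ne'
  refine (intervalIntegral.integral_eq_sub_of_hasDerivAt
    (fun x hx => hasDerivAt_arctan_rpow_sub_div ht hc.ne' hK (hpos x hx)) ?_).trans
    (sub_div _ _ _).symm
  refine (continuousOn_const.div ?_ fun x hx =>
    (rpow_completed_square_pos hc hK (hpos x hx)).ne').intervalIntegrable
  fun_prop (disch := assumption)

end CompletedSquare

theorem integral_one_div_le_of_le_on {f g : ℝ → ℝ} {a b : ℝ} (hab : a ≤ b)
    (hf : ContinuousOn f (Set.Icc a b)) (hg : ContinuousOn g (Set.Icc a b))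
    (hg_pos : ∀ x ∈ Set.Icc a b, 0 < g x) (hgf : ∀ x ∈ Set.Icc a b, g x ≤ f x) :
    ∫ x in a..b, 1 / f x ≤ ∫ x in a..b, 1 / g x := by
  have hf_pos x (hx : x ∈ Set.Icc a b) : 0 < f x := (hg_pos x hx).trans_le (hgf x hx)
  refine intervalIntegral.integral_mono_on hab ?_ ?_ fun x hx =>
    one_div_le_one_div_of_le (hg_pos x hx) (hgf x hx)
  · exact (continuousOn_const.div hf fun x hx => (hf_pos x hx).ne').intervalIntegrable_of_Icc hab
  · exact (continuousOn_const.div hg fun x hx => (hg_pos x hx).ne').intervalIntegrable_of_Icc hab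

theorem stmt9 (c1 c2 c3 μ : ℝ) (hc1 : 0 < c1) (hc2 : 0 < c2)
    (hc3pos : 0 < c3) (hc3 : c3 < 2 * Real.sqrt (c1 * c2)) (hμ : 1 < μ)
    (V0 : ℝ) (hV0 : 1 ≤ V0) :
    ∫ V in (1:ℝ)..V0, 1 / (c1 * V ^ (1 + 1/μ) + c2 * V ^ (1 - 1/μ) - c3) ≤
      μ / (c1 * Real.sqrt ((4*c1*c2 - c3^2) / (4*c1^2))) *
        (Real.pi / 2 - Real.arctan ((2*c1 - c3) / Real.sqrt (4*c1*c2 - c3^2))) := by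
  have hdisc : 0 < 4 * c1 * c2 - c3 ^ 2 := by
    nlinarith [sq_sqrt (mul_nonneg hc1.le hc2.le), sqrt_nonneg (c1 * c2)]
  set s := √(4 * c1 * c2 - c3 ^ 2)
  have hs : 0 < s := sqrt_pos.mpr hdisc
  rw [sqrt_div hdisc.le, show 4 * c1 ^ 2 = (2 * c1) ^ 2 by ring, sqrt_sq (by positivity)]
  set K := s / (2 * c1)
  set d := c3 / (2 * c1)
  set t := 1 / μ
  have hc3_eq : c3 = 2 * c1 * d := by simp only [d]; field_simp
  have hc2_eq : c2 = c1 * (d ^ 2 + K ^ 2) := by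
    have hs2 : s ^ 2 = 4 * c1 * c2 - c3 ^ 2 := sq_sqrt hdisc.le
    simp only [d, K]
    field_simp
    linear_combination -hs2
  have hne : ∀ V ∈ Set.Icc 1 V0, V ≠ 0 := fun V hV => (one_pos.trans_le hV.1).ne'
  calc ∫ V in (1:ℝ)..V0, 1 / (c1 * V ^ (1 + t) + c2 * V ^ (1 - t) - c3)
      ≤ ∫ V in (1:ℝ)..V0,
          1 / (c1 * V ^ (1 + t) - 2 * c1 * d * V + c1 * (d ^ 2 + K ^ 2) * V ^ (1 - t)) := by
        refine integral_one_div_le_of_le_on hV0 (by fun_prop (disch := assumption))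
          (by fun_prop (disch := assumption))
          (fun V hV => rpow_completed_square_pos hc1 (by positivity) (one_pos.trans_le hV.1))
          fun V hV => ?_
        rw [hc2_eq, ← hc3_eq]
        nlinarith [hV.1]
    _ = (arctan ((V0 ^ t - d) / K) - arctan ((1 ^ t - d) / K)) / (t * c1 * K) :=
        integral_one_div_rpow_completed_square (by positivity) hc1 (by positivity) one_pos hV0
    _ ≤ (π / 2 - arctan ((1 ^ t - d) / K)) / (t * c1 * K) := by
        gcongr; exact (arctan_lt_pi_div_two _).le
    _ = μ / (c1 * K) * (π / 2 - arctan ((2 * c1 - c3) / s)) := by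
        simp only [one_rpow, t, d, K]
        field_simp
end

section
/- Let $c_1, c_2, c_3 > 0$ with $c_3 \geq 2\sqrt{c_1 c_2}$, and let $\mu > 1$, $a_1 = 1+1/\mu$, $a_2 = 1-1/\mu$. Let $a \leq b$ be the real roots of $c_1 z^2 - c_3 z + c_2 = 0$, and fix $k > 1$ and $\bar V = (kb)^\mu$. Then for all $V_0 \geq \bar V$, $\int_{\bar V}^{V_0} \frac{dV}{c_1 V^{a_1} + c_2 V^{a_2} - c_3 V} \leq \frac{\mu}{c_1 (b - a)} \log\left(\frac{kb - a}{kb - b}\right)$ when $a < b$. -/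
/-!
Put `z = V ^ (1/μ)`. Since `a` and `b` are the roots of `c₁ z² - c₃ z + c₂`, the denominator
factors as `c₁ V^(1 - 1/μ) (z - a)(z - b)`, and a partial fraction decomposition shows that
`G V = μ / (c₁ (b - a)) · (log (z - b) - log (z - a))` is a primitive of the integrand for
`z > b`. Hence the integral equals `G V₀ - G V̄ ≤ -G V̄`, because `G ≤ 0`, and `-G V̄` is the
right-hand side since `V̄ ^ (1/μ) = k b`.
-/

open Real Set

section QuadraticRoots

variable {c1 c2 c3 d : ℝ}

lemma sq_sub_four_mul_pos_of_two_sqrt_lt (h : 2 * √(c1 * c2) < c3) :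
    0 < c3 ^ 2 - 4 * c1 * c2 := by
  have hsqrt : c1 * c2 ≤ √(c1 * c2) ^ 2 := sq_sqrt' (x := c1 * c2) ▸ le_max_left _ _
  nlinarith [sqrt_nonneg (c1 * c2)]

lemma quadratic_roots_sum (hc1 : c1 ≠ 0) :
    c1 * ((c3 - d) / (2 * c1) + (c3 + d) / (2 * c1)) = c3 := by
  field_simp
  ring

lemma quadratic_roots_prod (hc1 : c1 ≠ 0) (hd : d ^ 2 = c3 ^ 2 - 4 * c1 * c2) :
    c1 * ((c3 - d) / (2 * c1) * ((c3 + d) / (2 * c1))) = c2 := by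
  field_simp
  linear_combination -hd

end QuadraticRoots

section Primitive

variable {c1 c2 c3 a b μ V : ℝ}

lemma rpow_quadratic_factor (p : ℝ) (hV : 0 < V) (hsum : c1 * (a + b) = c3)
    (hprod : c1 * (a * b) = c2) :
    c1 * V ^ (1 + p) + c2 * V ^ (1 - p) - c3 * V
      = c1 * V ^ (1 - p) * ((V ^ p - a) * (V ^ p - b)) := by
  subst hsum hprod
  have : V ^ p ≠ 0 := (rpow_pos_of_pos hV p).ne'
  rw [rpow_add hV, rpow_sub hV, rpow_one]
  field_simp
  ring

noncomputable def logPrimitive (c1 a b μ V : ℝ) : ℝ :=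
  μ / (c1 * (b - a)) * (log (V ^ (1 / μ) - b) - log (V ^ (1 / μ) - a))

lemma hasDerivAt_logPrimitive (hc1 : c1 ≠ 0) (hμ : μ ≠ 0) (hab : a < b) (hV : 0 < V)
    (hbV : b < V ^ (1 / μ)) :
    HasDerivAt (logPrimitive c1 a b μ)
      (1 / (c1 * V ^ (1 - 1 / μ) * ((V ^ (1 / μ) - a) * (V ^ (1 / μ) - b)))) V := by
  have hroot : HasDerivAt (fun V : ℝ => V ^ (1 / μ)) (1 / μ * V ^ (1 / μ - 1)) V :=
    hasDerivAt_rpow_const (Or.inl hV.ne')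
  have hG := (((hroot.sub_const b).log (by linarith)).sub
    ((hroot.sub_const a).log (by linarith))).const_mul (μ / (c1 * (b - a)))
  refine hG.congr_deriv ?_
  have hza : V ^ (1 / μ) - a ≠ 0 := by linarith
  have hzb : V ^ (1 / μ) - b ≠ 0 := by linarith
  have hba : b - a ≠ 0 := by linarith
  rw [rpow_sub hV, rpow_sub hV, rpow_one]
  field_simp
  ring

lemma logPrimitive_nonpos (hc1 : 0 < c1) (hμ : 0 < μ) (hab : a < b) (hbV : b < V ^ (1 / μ)) :
    logPrimitive c1 a b μ V ≤ 0 := by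
  have hlog : log (V ^ (1 / μ) - b) ≤ log (V ^ (1 / μ) - a) :=
    log_le_log (by linarith) (by linarith)
  have hC : 0 < μ / (c1 * (b - a)) := div_pos hμ (mul_pos hc1 (by linarith))
  exact mul_nonpos_of_nonneg_of_nonpos hC.le (by linarith)

lemma logPrimitive_rpow_self {w : ℝ} (hμ : μ ≠ 0) (hab : a < b) (hw : 0 < w) (hbw : b < w) :
    logPrimitive c1 a b μ (w ^ μ) = -(μ / (c1 * (b - a)) * log ((w - a) / (w - b))) := by
  rw [logPrimitive, one_div, rpow_rpow_inv hw.le hμ, log_div (by linarith) (by linarith)]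
  ring

theorem integral_one_div_rpow_quadratic_le {w V0 : ℝ} (hc1 : 0 < c1) (hμ : 0 < μ)
    (hsum : c1 * (a + b) = c3) (hprod : c1 * (a * b) = c2) (hab : a < b) (hw : 0 < w)
    (hbw : b < w) (hV0 : w ^ μ ≤ V0) :
    ∫ V in w ^ μ..V0, 1 / (c1 * V ^ (1 + 1 / μ) + c2 * V ^ (1 - 1 / μ) - c3 * V)
      ≤ μ / (c1 * (b - a)) * log ((w - a) / (w - b)) := by
  have hroot : ∀ V ∈ Icc (w ^ μ) V0, 0 < V ∧ b < V ^ (1 / μ) := by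
    intro V hV
    refine ⟨(rpow_pos_of_pos hw μ).trans_le hV.1, hbw.trans_le ?_⟩
    calc w = (w ^ μ) ^ (1 / μ) := by rw [one_div, rpow_rpow_inv hw.le hμ.ne']
      _ ≤ V ^ (1 / μ) := rpow_le_rpow (by positivity) hV.1 (by positivity)
  have hderiv : ∀ V ∈ Icc (w ^ μ) V0, HasDerivAt (logPrimitive c1 a b μ)
      (1 / (c1 * V ^ (1 + 1 / μ) + c2 * V ^ (1 - 1 / μ) - c3 * V)) V := by
    intro V hV
    obtain ⟨hV, hbV⟩ := hroot V hV
    rw [rpow_quadratic_factor _ hV hsum hprod]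
    exact hasDerivAt_logPrimitive hc1.ne' hμ.ne' hab hV hbV
  have hpos : ∀ V ∈ Icc (w ^ μ) V0,
      0 ≤ 1 / (c1 * V ^ (1 + 1 / μ) + c2 * V ^ (1 - 1 / μ) - c3 * V) := by
    intro V hV
    obtain ⟨hV, hbV⟩ := hroot V hV
    rw [rpow_quadratic_factor _ hV hsum hprod]
    have hza : 0 < V ^ (1 / μ) - a := by linarith
    have hzb : 0 < V ^ (1 / μ) - b := by linarith
    have := rpow_pos_of_pos hV (1 - 1 / μ)
    positivity
  have hcont : ContinuousOn (logPrimitive c1 a b μ) (Icc (w ^ μ) V0) :=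
    fun V hV => (hderiv V hV).continuousAt.continuousWithinAt
  have hsub := Ioo_subset_Icc_self (a := w ^ μ) (b := V0)
  rw [intervalIntegral.integral_eq_sub_of_hasDerivAt_of_le hV0 hcont
    (fun V hV => hderiv V (hsub hV)) ?_, logPrimitive_rpow_self hμ.ne' hab hw hbw]
  · linarith [logPrimitive_nonpos hc1 hμ hab (hroot V0 ⟨hV0, le_rfl⟩).2]
  · exact (intervalIntegrable_iff_integrableOn_Ioc_of_le hV0).2 <|
      intervalIntegral.integrableOn_deriv_of_nonneg hcont (fun V hV => hderiv V (hsub hV))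
        (fun V hV => hpos V (hsub hV))

end Primitive

theorem stmt10_general (c1 c2 c3 μ k : ℝ) (hc1 : 0 < c1)
    (hc3 : 2 * Real.sqrt (c1 * c2) < c3) (hμ : 1 < μ) (hk : 1 < k) :
    let a := (c3 - Real.sqrt (c3^2 - 4*c1*c2)) / (2*c1)
    let b := (c3 + Real.sqrt (c3^2 - 4*c1*c2)) / (2*c1)
    let Vbar := (k * b) ^ μ
    ∀ V0, Vbar ≤ V0 →
      (∫ V in Vbar..V0, 1 / (c1 * V ^ (1 + 1/μ) + c2 * V ^ (1 - 1/μ) - c3 * V)) ≤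
        μ / (c1 * (b - a)) * Real.log ((k*b - a) / (k*b - b)) := by
  intro a b Vbar V0 hV0
  have hdisc := sq_sub_four_mul_pos_of_two_sqrt_lt hc3
  have hd := sqrt_pos.2 hdisc
  have hc3_pos : 0 < c3 := lt_of_le_of_lt (by positivity) hc3
  have hab : a < b := div_lt_div_of_pos_right (by linarith) (by linarith)
  have hb : 0 < b := div_pos (by positivity) (by linarith)
  exact integral_one_div_rpow_quadratic_le hc1 (by linarith) (quadratic_roots_sum hc1.ne')
    (quadratic_roots_prod hc1.ne' (sq_sqrt hdisc.le)) hab (by positivity) (by nlinarith) hV0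

theorem stmt10 (c1 c2 c3 μ k : ℝ) (hc1 : 0 < c1) (hc2 : 0 < c2)
    (hc3 : 2 * Real.sqrt (c1 * c2) < c3) (hμ : 1 < μ) (hk : 1 < k) :
    let a := (c3 - Real.sqrt (c3^2 - 4*c1*c2)) / (2*c1)
    let b := (c3 + Real.sqrt (c3^2 - 4*c1*c2)) / (2*c1)
    let Vbar := (k * b) ^ μ
    ∀ V0, Vbar ≤ V0 →
      (∫ V in Vbar..V0, 1 / (c1 * V ^ (1 + 1/μ) + c2 * V ^ (1 - 1/μ) - c3 * V)) ≤
        μ / (c1 * (b - a)) * Real.log ((k*b - a) / (k*b - b)) :=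
  stmt10_general c1 c2 c3 μ k hc1 hc3 hμ hk
end
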